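/- Characterization of terms equivalent to a pair: if ⟨r,s⟩ ⇄* t in Polymorphic System I, then t is either a pair ⟨u,v⟩ (with one of three decompositions relating u,v to r,s via ⇄* and pairing), an abstraction λxᴬ.a with a ⇄* ⟨a₁,a₂⟩, r ⇄* λxᴬ.a₁ and s ⇄* λxᴬ.a₂, an application a v with a ⇄* ⟨a₁,a₂⟩, r ⇄* a₁v and s ⇄* a₂v, a type abstraction ΛX.a with a ⇄* ⟨a₁,a₂⟩, r ⇄* ΛX.a₁ and s ⇄* ΛX.a₂, or a type application a[A] with a ⇄* ⟨a₁,a₂⟩, r ⇄* a₁[A] and s ⇄* a₂[A]. In the pair case ⟨u,v⟩, one of: (a) u ⇄* ⟨t₁₁,t₂₁⟩ and v ⇄* ⟨t₁₂,t₂₂⟩ with r ⇄* ⟨t₁₁,t₁₂⟩ and s ⇄* ⟨t₂₁,t₂₂⟩; (b) v ⇄* ⟨w,s⟩ with r ⇄* ⟨u,w⟩ (or one of the three symmetric cases); (c) r ⇄* u and s ⇄* v (or symmetrically). -/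

import Mathlib

/-- Types of Polymorphic System I: variables, arrows, conjunctions, universal types. -/
inductive Ty : Type
  | var : ℕ → Ty
  | arr : Ty → Ty → Ty
  | conj : Ty → Ty → Ty
  | all : ℕ → Ty → Ty
deriving DecidableEq

/-- Free type variables. -/
def ftv : Ty → Finset ℕ
  | .var X => {X}
  | .arr A B => ftv A ∪ ftv B
  | .conj A B => ftv A ∪ ftv B
  | .all X A => ftv A \ {X}

/-- Type isomorphism ≡: the smallest congruence generated by the six isomorphisms of PSI. -/
inductive TyEquiv : Ty → Ty → Prop
  | comm (A B) : TyEquiv (.conj A B) (.conj B A)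
  | assoc (A B C) : TyEquiv (.conj A (.conj B C)) (.conj (.conj A B) C)
  | distArr (A B C) : TyEquiv (.arr A (.conj B C)) (.conj (.arr A B) (.arr A C))
  | curry (A B C) : TyEquiv (.arr (.conj A B) C) (.arr A (.arr B C))
  | allArr (X A B) : X ∉ ftv A → TyEquiv (.all X (.arr A B)) (.arr A (.all X B))
  | allConj (X A B) : TyEquiv (.all X (.conj A B)) (.conj (.all X A) (.all X B))
  | refl (A) : TyEquiv A A
  | symm {A B} : TyEquiv A B → TyEquiv B A
  | trans {A B C} : TyEquiv A B → TyEquiv B C → TyEquiv A C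
  | congArr {A A' B B'} : TyEquiv A A' → TyEquiv B B' → TyEquiv (.arr A B) (.arr A' B')
  | congConj {A A' B B'} : TyEquiv A A' → TyEquiv B B' → TyEquiv (.conj A B) (.conj A' B')
  | congAll (X) {A B} : TyEquiv A B → TyEquiv (.all X A) (.all X B)

/-- Auxiliary for PF: turn ∀X⃗.(C ⇒ Y) into ∀X⃗.((A ∧ C) ⇒ Y). -/
def pushArr (A : Ty) : Ty → Ty
  | .all X t => .all X (pushArr A t)
  | .arr C Y => .arr (.conj A C) Y
  | t => t

/-- Multiset of prime factors of a type. -/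
def PF : Ty → Multiset Ty
  | .var X => {.var X}
  | .arr A B => (PF B).map (pushArr A)
  | .conj A B => PF A + PF B
  | .all X A => (PF A).map (.all X)

/-- Being of the form ∀X₁...∀Xₙ.(B ⇒ Y) with Y a type variable. -/
inductive IsPrimeForm : Ty → Prop
  | base (B Y) : IsPrimeForm (.arr B (.var Y))
  | step (X) {t} : IsPrimeForm t → IsPrimeForm (.all X t)

/-- Conjunction of a (nonempty) list of types, A₁ ∧ ... ∧ Aₙ. -/
def conjList : List Ty → Ty
  | [] => .var 0
  | [A] => A
  | A :: l => .conj A (conjList l)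

/-- ∀X₁...∀Xₙ.A -/
def allList (l : List ℕ) (A : Ty) : Ty := l.foldr .all A

/-- Substitution of a type for a type variable in a type. -/
def substTy (X : ℕ) (B : Ty) : Ty → Ty
  | .var Y => if Y = X then B else .var Y
  | .arr C D => .arr (substTy X B C) (substTy X B D)
  | .conj C D => .conj (substTy X B C) (substTy X B D)
  | .all Y C => if Y = X then .all Y C else .all Y (substTy X B C)

/-- Terms of PSI (Church style). -/
inductive Tm : Type
  | var : ℕ → Ty → Tm
  | lam : ℕ → Ty → Tm → Tm
  | app : Tm → Tm → Tm
  | pair : Tm → Tm → Tm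
  | proj : Ty → Tm → Tm
  | tlam : ℕ → Tm → Tm
  | tapp : Tm → Ty → Tm

/-- Substitution of a term for a term variable. -/
def substTm (x : ℕ) (s : Tm) : Tm → Tm
  | .var y A => if y = x then s else .var y A
  | .lam y A r => if y = x then .lam y A r else .lam y A (substTm x s r)
  | .app r t => .app (substTm x s r) (substTm x s t)
  | .pair r t => .pair (substTm x s r) (substTm x s t)
  | .proj A r => .proj A (substTm x s r)
  | .tlam X r => .tlam X (substTm x s r)
  | .tapp r A => .tapp (substTm x s r) A

/-- Substitution of a type for a type variable in a term. -/
def substTyTm (X : ℕ) (B : Ty) : Tm → Tm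
  | .var y A => .var y (substTy X B A)
  | .lam y A r => .lam y (substTy X B A) (substTyTm X B r)
  | .app r t => .app (substTyTm X B r) (substTyTm X B t)
  | .pair r t => .pair (substTyTm X B r) (substTyTm X B t)
  | .proj A r => .proj (substTy X B A) (substTyTm X B r)
  | .tlam Y r => if Y = X then .tlam Y r else .tlam Y (substTyTm X B r)
  | .tapp r A => .tapp (substTyTm X B r) (substTy X B A)

abbrev Ctx := List (ℕ × Ty)

def ftvCtx (Γ : Ctx) : Finset ℕ := Γ.foldr (fun p s => ftv p.2 ∪ s) ∅

def substCtx (X : ℕ) (B : Ty) (Γ : Ctx) : Ctx := Γ.map (fun p => (p.1, substTy X B p.2))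

/-- Typing relation of PSI. -/
inductive Typing : Ctx → Tm → Ty → Prop
  | ax {Γ x A} : (x, A) ∈ Γ → Typing Γ (.var x A) A
  | equiv {Γ r A B} : Typing Γ r A → TyEquiv A B → Typing Γ r B
  | arrI {Γ x A r B} : Typing ((x, A) :: Γ) r B → Typing Γ (.lam x A r) (.arr A B)
  | arrE {Γ r s A B} : Typing Γ r (.arr A B) → Typing Γ s A → Typing Γ (.app r s) B
  | conjI {Γ r s A B} : Typing Γ r A → Typing Γ s B → Typing Γ (.pair r s) (.conj A B)
  | conjE {Γ r A B} : Typing Γ r (.conj A B) → Typing Γ (.proj A r) A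
  | allI {Γ r X A} : Typing Γ r A → X ∉ ftvCtx Γ → Typing Γ (.tlam X r) (.all X A)
  | allE {Γ r X A B} : Typing Γ r (.all X A) → Typing Γ (.tapp r B) (substTy X B A)

/-- "r has type A" (context is redundant in Church style). -/
def HasTy (r : Tm) (A : Ty) : Prop := ∃ Γ, Typing Γ r A

/-- One-step structural equivalence ⇄ (symmetric, closed under all term contexts). -/
inductive StEq : Tm → Tm → Prop
  | comm (r s) : StEq (.pair r s) (.pair s r)
  | assoc (r s t) : StEq (.pair r (.pair s t)) (.pair (.pair r s) t)
  | distLam (x A r s) : StEq (.lam x A (.pair r s)) (.pair (.lam x A r) (.lam x A s))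
  | distApp (r s t) : StEq (.app (.pair r s) t) (.pair (.app r t) (.app s t))
  | curry (r s t) : StEq (.app r (.pair s t)) (.app (.app r s) t)
  | pcommII (X x A r) : X ∉ ftv A → StEq (.tlam X (.lam x A r)) (.lam x A (.tlam X r))
  | pcommEI (X x A B r) : X ∉ ftv A → StEq (.tapp (.lam x A r) B) (.lam x A (.tapp r B))
  | pdistII (X r s) : StEq (.tlam X (.pair r s)) (.pair (.tlam X r) (.tlam X s))
  | pdistEI (r s A) : StEq (.tapp (.pair r s) A) (.pair (.tapp r A) (.tapp s A))
  | pdistIE (X A r) : StEq (.proj (.all X A) (.tlam X r)) (.tlam X (.proj A r))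
  | pdistEE (X A B C r) : HasTy r (.all X (.conj B C)) →
      StEq (.tapp (.proj (.all X B) r) A) (.proj (substTy X A B) (.tapp r A))
  | symm {r s} : StEq r s → StEq s r
  | congLam (x A) {r s} : StEq r s → StEq (.lam x A r) (.lam x A s)
  | congAppL (t) {r s} : StEq r s → StEq (.app r t) (.app s t)
  | congAppR (t) {r s} : StEq r s → StEq (.app t r) (.app t s)
  | congPairL (t) {r s} : StEq r s → StEq (.pair r t) (.pair s t)
  | congPairR (t) {r s} : StEq r s → StEq (.pair t r) (.pair t s)
  | congProj (A) {r s} : StEq r s → StEq (.proj A r) (.proj A s)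
  | congTlam (X) {r s} : StEq r s → StEq (.tlam X r) (.tlam X s)
  | congTapp (A) {r s} : StEq r s → StEq (.tapp r A) (.tapp s A)

/-- One-step reduction ↪ (typed β-reductions and typed projection, closed under contexts). -/
inductive Red : Tm → Tm → Prop
  | beta (x A r s) : HasTy s A → Red (.app (.lam x A r) s) (substTm x s r)
  | tbeta (X A r) : Red (.tapp (.tlam X r) A) (substTyTm X A r)
  | pi (A r s) : HasTy r A → Red (.proj A (.pair r s)) r
  | congLam (x A) {r s} : Red r s → Red (.lam x A r) (.lam x A s)
  | congAppL (t) {r s} : Red r s → Red (.app r t) (.app s t)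
  | congAppR (t) {r s} : Red r s → Red (.app t r) (.app t s)
  | congPairL (t) {r s} : Red r s → Red (.pair r t) (.pair s t)
  | congPairR (t) {r s} : Red r s → Red (.pair t r) (.pair t s)
  | congProj (A) {r s} : Red r s → Red (.proj A r) (.proj A s)
  | congTlam (X) {r s} : Red r s → Red (.tlam X r) (.tlam X s)
  | congTapp (A) {r s} : Red r s → Red (.tapp r A) (.tapp s A)

/-- ⇄*: reflexive-transitive closure of ⇄. -/
def SeqStar : Tm → Tm → Prop := Relation.ReflTransGen StEq

/-- The operational semantics → = ⇄* ∘ ↪ ∘ ⇄*. -/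
def Step (r s : Tm) : Prop := ∃ r' s', SeqStar r r' ∧ Red r' s' ∧ SeqStar s' s

/-- Strong normalisation with respect to →. -/
def SN (r : Tm) : Prop := Acc (fun a b => Step b a) r

/-- The measure P on terms. -/
def Pm : Tm → ℕ
  | .var _ _ => 0
  | .lam _ _ r => Pm r
  | .app r _ => Pm r
  | .pair r s => 1 + Pm r + Pm s
  | .proj _ r => Pm r
  | .tlam _ r => Pm r
  | .tapp r _ => Pm r

/-- The measure M on terms. -/
def Mm : Tm → ℕ
  | .var _ _ => 1
  | .lam _ _ r => 1 + Mm r + Pm r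
  | .app r s => Mm r + Mm s + Pm r * Mm s
  | .pair r s => Mm r + Mm s
  | .proj _ r => 1 + Mm r + Pm r
  | .tlam _ r => 1 + Mm r + Pm r
  | .tapp r _ => 1 + Mm r + Pm r

section EqProdAux
open Tm

private lemma ss_refl (a : Tm) : SeqStar a a := Relation.ReflTransGen.refl
private lemma ss_single {a b : Tm} (h : StEq a b) : SeqStar a b := Relation.ReflTransGen.single h
private lemma ss_trans {a b c : Tm} (h1 : SeqStar a b) (h2 : SeqStar b c) : SeqStar a c :=
  Relation.ReflTransGen.trans h1 h2
private lemma ss_symm {a b : Tm} (h : SeqStar a b) : SeqStar b a :=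
  haveI : Std.Symm StEq := ⟨fun _ _ hh => StEq.symm hh⟩; Std.Symm.symm (r := Relation.ReflTransGen StEq) _ _ h

private lemma ss_lift {φ : Tm → Tm} (hc : ∀ {a b : Tm}, StEq a b → StEq (φ a) (φ b))
    {a b : Tm} (h : SeqStar a b) : SeqStar (φ a) (φ b) :=
  Relation.ReflTransGen.lift φ (fun _ _ hh => hc hh) _ _ h

private lemma ss_pairL {t a b : Tm} (h : SeqStar a b) : SeqStar (pair a t) (pair b t) :=
  ss_lift (fun hh => StEq.congPairL t hh) h
private lemma ss_pairR {t a b : Tm} (h : SeqStar a b) : SeqStar (pair t a) (pair t b) :=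
  ss_lift (fun hh => StEq.congPairR t hh) h
private lemma ss_pair {a a' b b' : Tm} (h1 : SeqStar a a') (h2 : SeqStar b b') :
    SeqStar (pair a b) (pair a' b') := ss_trans (ss_pairL h1) (ss_pairR h2)

/-- Plain pair-trees with a given multiset of leaves. -/
private inductive PTree : Tm → Multiset Tm → Prop
  | leaf (t) : PTree t {t}
  | node {u v F G} : PTree u F → PTree v G → PTree (Tm.pair u v) (F + G)

private lemma ptree_ne {f : Tm} {F : Multiset Tm} (h : PTree f F) : F ≠ 0 := by
  induction h with
  | leaf t => simp
  | node h1 h2 ih1 ih2 =>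
    intro h0
    have := congrArg Multiset.card h0
    simp only [Multiset.card_add, Multiset.card_zero, Nat.add_eq_zero] at this
    exact ih1 (Multiset.card_eq_zero.mp this.1)

private lemma ptree_exists {F : Multiset Tm} (h : F ≠ 0) : ∃ f, PTree f F := by
  induction F using Multiset.induction_on with
  | empty => exact absurd rfl h
  | cons a F ih =>
    by_cases hF : F = 0
    · subst hF; exact ⟨a, PTree.leaf a⟩
    · obtain ⟨f, hf⟩ := ih hF
      exact ⟨pair a f, by simpa using PTree.node (PTree.leaf a) hf⟩

private lemma ptree_extract {t : Tm} {H : Multiset Tm} (h : PTree t H) :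
    ∀ {a : Tm} {F : Multiset Tm}, H = a ::ₘ F →
      (F = 0 ∧ t = a) ∨ ∃ f, PTree f F ∧ SeqStar t (pair a f) := by
  induction h with
  | leaf t =>
    intro a F hF
    rw [Multiset.singleton_eq_cons_iff] at hF
    exact Or.inl ⟨hF.2.symm ▸ rfl, hF.1⟩
  | @node u v F₁ F₂ h1 h2 ih1 ih2 =>
    intro a F hF
    have ha : a ∈ F₁ + F₂ := by rw [hF]; exact Multiset.mem_cons_self a F
    rcases Multiset.mem_add.mp ha with ha | ha
    · obtain ⟨F₁', rfl⟩ := Multiset.exists_cons_of_mem ha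
      have hF' : F = F₁' + F₂ := by
        have : a ::ₘ (F₁' + F₂) = a ::ₘ F := by rw [← hF]; simp [Multiset.cons_add]
        exact (Multiset.cons_inj_right a |>.mp this).symm
      rcases ih1 rfl with ⟨rfl, rfl⟩ | ⟨f, hf, hseq⟩
      · exact Or.inr ⟨v, by simpa [hF'] using h2, ss_refl _⟩
      · refine Or.inr ⟨pair f v, by rw [hF']; exact PTree.node hf h2, ?_⟩
        exact ss_trans (ss_pairL hseq)
          (ss_single (StEq.symm (StEq.assoc a f v)))
    · obtain ⟨F₂', rfl⟩ := Multiset.exists_cons_of_mem ha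
      have hF' : F = F₁ + F₂' := by
        have : a ::ₘ (F₁ + F₂') = a ::ₘ F := by
          rw [← hF, Multiset.add_cons]
        exact (Multiset.cons_inj_right a |>.mp this).symm
      rcases ih2 rfl with ⟨rfl, rfl⟩ | ⟨f, hf, hseq⟩
      · exact Or.inr ⟨u, by simpa [hF'] using h1, ss_single (StEq.comm u _)⟩
      · refine Or.inr ⟨pair u f, by rw [hF']; exact PTree.node h1 hf, ?_⟩
        refine ss_trans (ss_pairR hseq) ?_
        refine ss_trans (ss_single (StEq.assoc u a f)) ?_
        refine ss_trans (ss_single (StEq.congPairL f (StEq.comm u a))) ?_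
        exact ss_single (StEq.symm (StEq.assoc a u f))
private lemma regroup {f : Tm} {F G : Multiset Tm} (h : PTree f (F + G))
    (hF : F ≠ 0) (hG : G ≠ 0) :
    ∃ f₁ f₂, PTree f₁ F ∧ PTree f₂ G ∧ SeqStar f (pair f₁ f₂) := by
  induction F using Multiset.induction_on generalizing f with
  | empty => exact absurd rfl hF
  | cons a F' ih =>
    rw [Multiset.cons_add] at h
    rcases ptree_extract h rfl with ⟨h0, _⟩ | ⟨f', hf', hseq⟩
    · refine absurd ?_ hG
      have := congrArg Multiset.card h0
      simp only [Multiset.card_add, Multiset.card_zero] at this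
      exact Multiset.card_eq_zero.mp (by omega)
    · by_cases hF' : F' = 0
      · subst hF'
        rw [zero_add] at hf'
        exact ⟨a, f', by simpa using PTree.leaf a, hf', hseq⟩
      · obtain ⟨f₁, f₂, h1, h2, hsq⟩ := ih hf' hF'
        refine ⟨pair a f₁, f₂, by simpa [Multiset.cons_add] using PTree.node (PTree.leaf a) h1, h2, ?_⟩
        exact ss_trans hseq (ss_trans (ss_pairR hsq) (ss_single (StEq.assoc a f₁ f₂)))

private lemma ptree_singleton {f a : Tm} (h : PTree f ({a} : Multiset Tm)) : f = a := by
  rcases ptree_extract h (show ({a} : Multiset Tm) = a ::ₘ 0 by rfl) with ⟨_, rfl⟩ | ⟨f', hf', _⟩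
  · rfl
  · exact absurd rfl (ptree_ne hf')

private lemma ptree_equiv {f g : Tm} {F : Multiset Tm} (hf : PTree f F) (hg : PTree g F) :
    SeqStar f g := by
  induction hg generalizing f with
  | leaf t => rw [ptree_singleton hf]; exact ss_refl _
  | node h1 h2 ih1 ih2 =>
    obtain ⟨f₁, f₂, hf1, hf2, hsq⟩ := regroup hf (ptree_ne h1) (ptree_ne h2)
    exact ss_trans hsq (ss_pair (ih1 hf1) (ih2 hf2))

/-- `x` is equivalent to some pair tree over `F`. -/
private def Rg (F : Multiset Tm) (x : Tm) : Prop := ∃ f, PTree f F ∧ SeqStar x f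

private lemma rg_ne {F : Multiset Tm} {x : Tm} (h : Rg F x) : F ≠ 0 :=
  ptree_ne h.choose_spec.1

private lemma rg_tree {F : Multiset Tm} {x f : Tm} (h : Rg F x) (hf : PTree f F) :
    SeqStar x f := by
  obtain ⟨g, hg, hxg⟩ := h
  exact ss_trans hxg (ptree_equiv hg hf)

/-- Push a distributing unary context through a pair tree. -/
private lemma ptree_push {φ : Tm → Tm}
    (hdist : ∀ a b : Tm, StEq (φ (pair a b)) (pair (φ a) (φ b)))
    {g : Tm} {K : Multiset Tm} (h : PTree g K) :
    ∃ g', PTree g' (K.map φ) ∧ SeqStar (φ g) g' := by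
  induction h with
  | leaf t => exact ⟨φ t, by simpa using PTree.leaf (φ t), ss_refl _⟩
  | node h1 h2 ih1 ih2 =>
    obtain ⟨g₁, hg1, hs1⟩ := ih1
    obtain ⟨g₂, hg2, hs2⟩ := ih2
    refine ⟨pair g₁ g₂, by simpa [Multiset.map_add] using PTree.node hg1 hg2, ?_⟩
    exact ss_trans (ss_single (hdist _ _)) (ss_pair hs1 hs2)

/-- Leafwise refinement of fringes. -/
private inductive Refn : Multiset Tm → Multiset Tm → Prop
  | zero : Refn 0 0
  | cons {a g : Tm} {K H H' : Multiset Tm} (h1 : SeqStar a g) (h2 : PTree g K) (h3 : Refn H H') :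
      Refn (a ::ₘ H) (K + H')

private lemma refn_map_pt {φ ψ : Tm → Tm} (hpt : ∀ a : Tm, SeqStar (φ a) (ψ a))
    (H : Multiset Tm) : Refn (H.map φ) (H.map ψ) := by
  induction H using Multiset.induction_on with
  | empty => exact Refn.zero
  | cons a H ih =>
    simp only [Multiset.map_cons]
    have := Refn.cons (hpt a) (PTree.leaf (ψ a)) ih
    simpa [Multiset.singleton_add] using this

private lemma refn_refl (H : Multiset Tm) : Refn H H := by
  have := refn_map_pt (φ := id) (ψ := id) (fun a => ss_refl a) H
  simpa using this

private lemma refn_add {F F' G G' : Multiset Tm} (h1 : Refn F F') (h2 : Refn G G') :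
    Refn (F + G) (F' + G') := by
  induction h1 with
  | zero => simpa using h2
  | cons hs hp hsub ih =>
    rw [Multiset.cons_add]
    have := Refn.cons hs hp ih
    rwa [← add_assoc] at this

private lemma refn_single {a g : Tm} {K : Multiset Tm} (h1 : SeqStar a g) (h2 : PTree g K) :
    Refn {a} K := by
  have := Refn.cons h1 h2 Refn.zero
  simpa using this

private lemma refn_zero_inv' {N H : Multiset Tm} (h : Refn N H) : N = 0 → H = 0 := by
  induction h with
  | zero => intro; rfl
  | cons h1 h2 h3 ih => intro hN; exact absurd hN (Multiset.cons_ne_zero)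

private lemma refn_zero_inv {H : Multiset Tm} (h : Refn 0 H) : H = 0 := refn_zero_inv' h rfl

private lemma refn_cons_inv {N H' : Multiset Tm} (h : Refn N H') :
    ∀ {a : Tm} {M : Multiset Tm}, N = a ::ₘ M →
      ∃ g K M', SeqStar a g ∧ PTree g K ∧ Refn M M' ∧ H' = K + M' := by
  induction h with
  | zero =>
    intro a M hM
    exact absurd hM.symm (Multiset.cons_ne_zero)
  | @cons b g K H H' h1 h2 h3 ih =>
    intro a M hM
    rcases Multiset.cons_eq_cons.mp hM with ⟨rfl, rfl⟩ | ⟨_, cs, hcs1, hcs2⟩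
    · exact ⟨g, K, H', h1, h2, h3, rfl⟩
    · obtain ⟨g', K', M'', hs', hp', hsub', hH'⟩ := ih hcs1
      refine ⟨g', K', K + M'', hs', hp', ?_, ?_⟩
      · rw [hcs2]; exact Refn.cons h1 h2 hsub'
      · rw [hH']; rw [← add_assoc, ← add_assoc, add_comm K K']

private lemma refn_split {F G H' : Multiset Tm} (h : Refn (F + G) H') :
    ∃ F' G', H' = F' + G' ∧ Refn F F' ∧ Refn G G' := by
  induction F using Multiset.induction_on generalizing H' with
  | empty => exact ⟨0, H', by simp, Refn.zero, by simpa using h⟩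
  | cons a F ih =>
    rw [Multiset.cons_add] at h
    obtain ⟨g, K, M', hs, hp, hsub, rfl⟩ := refn_cons_inv h rfl
    obtain ⟨F', G', rfl, hF', hG'⟩ := ih hsub
    exact ⟨K + F', G', by rw [add_assoc], Refn.cons hs hp hF', hG'⟩

private lemma refn_rg {F F' : Multiset Tm} (h : Refn F F') : ∀ {x : Tm}, Rg F x → Rg F' x := by
  induction h with
  | zero => intro x hx; exact absurd rfl (rg_ne hx)
  | @cons a g K H H' h1 h2 h3 ih =>
    intro x hx
    obtain ⟨f, hf, hxf⟩ := hx
    rcases ptree_extract hf rfl with ⟨rfl, rfl⟩ | ⟨f', hf', hseq⟩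
    · rw [refn_zero_inv h3]
      exact ⟨g, by simpa using h2, ss_trans hxf h1⟩
    · obtain ⟨h'', hh'', hsh⟩ := ih ⟨f', hf', ss_refl f'⟩
      exact ⟨pair g h'', PTree.node h2 hh'',
        ss_trans hxf (ss_trans hseq (ss_pair h1 hsh))⟩

private lemma refn_map {φ : Tm → Tm}
    (hdist : ∀ a b : Tm, StEq (φ (pair a b)) (pair (φ a) (φ b)))
    (hcong : ∀ {a b : Tm}, StEq a b → StEq (φ a) (φ b))
    {H H' : Multiset Tm} (h : Refn H H') : Refn (H.map φ) (H'.map φ) := by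
  induction h with
  | zero => simpa using Refn.zero
  | @cons a g K H H' h1 h2 h3 ih =>
    obtain ⟨g', hg', hsg⟩ := ptree_push hdist h2
    simp only [Multiset.map_cons, Multiset.map_add]
    exact Refn.cons (ss_trans (ss_lift hcong h1) hsg) hg' ih

private lemma riesz {a b c d : Multiset Tm} (h : a + b = c + d) :
    ∃ w x y z, a = w + x ∧ b = y + z ∧ c = w + y ∧ d = x + z := by
  induction c using Multiset.induction_on generalizing a b d with
  | empty =>
    exact ⟨0, a, 0, b, by simp, by simp, by simp, by simpa using h.symm⟩
  | cons e c ih =>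
    rw [Multiset.cons_add] at h
    have he : e ∈ a + b := by rw [h]; exact Multiset.mem_cons_self e _
    rcases Multiset.mem_add.mp he with he | he
    · obtain ⟨a', rfl⟩ := Multiset.exists_cons_of_mem he
      rw [Multiset.cons_add] at h
      have h' := Multiset.cons_inj_right e |>.mp h
      obtain ⟨w, x, y, z, h1, h2, h3, h4⟩ := ih h'
      exact ⟨e ::ₘ w, x, y, z, by rw [Multiset.cons_add, h1], h2, by rw [Multiset.cons_add, h3], h4⟩
    · obtain ⟨b', rfl⟩ := Multiset.exists_cons_of_mem he
      rw [Multiset.add_cons] at h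
      have h' := Multiset.cons_inj_right e |>.mp h
      obtain ⟨w, x, y, z, h1, h2, h3, h4⟩ := ih h'
      exact ⟨w, x, e ::ₘ y, z, h1, by rw [Multiset.cons_add, h2], by rw [Multiset.add_cons, h3], h4⟩

private lemma map_split {φ : Tm → Tm} {H F G : Multiset Tm} (h : H.map φ = F + G) :
    ∃ F₀ G₀, H = F₀ + G₀ ∧ F = F₀.map φ ∧ G = G₀.map φ := by
  induction F using Multiset.induction_on generalizing H with
  | empty => exact ⟨0, H, by simp, by simp, by simpa using h.symm⟩
  | cons b F ih =>
    rw [Multiset.cons_add] at h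
    have hb : b ∈ H.map φ := by rw [h]; exact Multiset.mem_cons_self b _
    obtain ⟨a, haH, rfl⟩ := Multiset.mem_map.mp hb
    obtain ⟨H', rfl⟩ := Multiset.exists_cons_of_mem haH
    rw [Multiset.map_cons] at h
    have h' := Multiset.cons_inj_right (φ a) |>.mp h
    obtain ⟨F₀, G₀, rfl, hF, hG⟩ := ih h'
    exact ⟨a ::ₘ F₀, G₀, by rw [Multiset.cons_add], by rw [Multiset.map_cons, hF], hG⟩
/-- Extended decomposition of a term into a fringe multiset. -/
private inductive Dec : Tm → Multiset Tm → Prop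
  | leaf (t) : Dec t {t}
  | node {u v F G} : Dec u F → Dec v G → Dec (Tm.pair u v) (F + G)
  | lamD (x A) {a H} : Dec a H → Dec (Tm.lam x A a) (H.map (Tm.lam x A))
  | appD (w) {a H} : Dec a H → Dec (Tm.app a w) (H.map (fun h => Tm.app h w))
  | tlamD (X) {a H} : Dec a H → Dec (Tm.tlam X a) (H.map (Tm.tlam X))
  | tappD (A) {a H} : Dec a H → Dec (Tm.tapp a A) (H.map (fun h => Tm.tapp h A))

private lemma dec_pair_inv {u v : Tm} {H : Multiset Tm} (h : Dec (pair u v) H) :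
    H = {pair u v} ∨ ∃ F G, Dec u F ∧ Dec v G ∧ H = F + G := by
  cases h with
  | leaf => exact Or.inl rfl
  | node h1 h2 => exact Or.inr ⟨_, _, h1, h2, rfl⟩

private lemma dec_lam_inv {x A} {a : Tm} {H : Multiset Tm} (h : Dec (lam x A a) H) :
    ∃ H₀, Dec a H₀ ∧ H = H₀.map (Tm.lam x A) := by
  cases h with
  | leaf => exact ⟨{a}, Dec.leaf a, by simp⟩
  | lamD _ _ h0 => exact ⟨_, h0, rfl⟩

private lemma dec_app_inv {a w : Tm} {H : Multiset Tm} (h : Dec (app a w) H) :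
    ∃ H₀, Dec a H₀ ∧ H = H₀.map (fun h => Tm.app h w) := by
  cases h with
  | leaf => exact ⟨{a}, Dec.leaf a, by simp⟩
  | appD _ h0 => exact ⟨_, h0, rfl⟩

private lemma dec_tlam_inv {X} {a : Tm} {H : Multiset Tm} (h : Dec (tlam X a) H) :
    ∃ H₀, Dec a H₀ ∧ H = H₀.map (Tm.tlam X) := by
  cases h with
  | leaf => exact ⟨{a}, Dec.leaf a, by simp⟩
  | tlamD _ h0 => exact ⟨_, h0, rfl⟩

private lemma dec_tapp_inv {a : Tm} {A} {H : Multiset Tm} (h : Dec (tapp a A) H) :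
    ∃ H₀, Dec a H₀ ∧ H = H₀.map (fun h => Tm.tapp h A) := by
  cases h with
  | leaf => exact ⟨{a}, Dec.leaf a, by simp⟩
  | tappD _ h0 => exact ⟨_, h0, rfl⟩

private lemma dec_proj_inv {A} {a : Tm} {H : Multiset Tm} (h : Dec (proj A a) H) :
    H = {proj A a} := by cases h with | leaf => rfl

private lemma dec_sound {t : Tm} {H : Multiset Tm} (h : Dec t H) :
    ∃ f, PTree f H ∧ SeqStar t f := by
  induction h with
  | leaf t => exact ⟨t, PTree.leaf t, ss_refl t⟩
  | node h1 h2 ih1 ih2 =>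
    obtain ⟨f₁, hf1, hs1⟩ := ih1
    obtain ⟨f₂, hf2, hs2⟩ := ih2
    exact ⟨pair f₁ f₂, PTree.node hf1 hf2, ss_pair hs1 hs2⟩
  | lamD x A h0 ih =>
    obtain ⟨f, hf, hs⟩ := ih
    obtain ⟨g, hg, hsg⟩ := ptree_push (fun a b => StEq.distLam x A a b) hf
    exact ⟨g, hg, ss_trans (ss_lift (fun hh => StEq.congLam x A hh) hs) hsg⟩
  | appD w h0 ih =>
    obtain ⟨f, hf, hs⟩ := ih
    obtain ⟨g, hg, hsg⟩ := ptree_push (φ := fun h => Tm.app h w) (fun a b => StEq.distApp a b w) hf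
    exact ⟨g, hg, ss_trans (ss_lift (fun hh => StEq.congAppL w hh) hs) hsg⟩
  | tlamD X h0 ih =>
    obtain ⟨f, hf, hs⟩ := ih
    obtain ⟨g, hg, hsg⟩ := ptree_push (fun a b => StEq.pdistII X a b) hf
    exact ⟨g, hg, ss_trans (ss_lift (fun hh => StEq.congTlam X hh) hs) hsg⟩
  | tappD A h0 ih =>
    obtain ⟨f, hf, hs⟩ := ih
    obtain ⟨g, hg, hsg⟩ := ptree_push (φ := fun h => Tm.tapp h A) (fun a b => StEq.pdistEI a b A) hf
    exact ⟨g, hg, ss_trans (ss_lift (fun hh => StEq.congTapp A hh) hs) hsg⟩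

/-- transfer property for one direction of a step -/
private def Tr (t t' : Tm) : Prop := ∀ H, Dec t H → ∃ H', Dec t' H' ∧ Refn H H'

private lemma leaf_step {t t' : Tm} (h : StEq t t') : ∃ H', Dec t' H' ∧ Refn ({t} : Multiset Tm) H' :=
  ⟨{t'}, Dec.leaf t', refn_single (ss_single h) (PTree.leaf t')⟩

private lemma distrib_case {φ : Tm → Tm}
    (hdist : ∀ a b : Tm, StEq (φ (pair a b)) (pair (φ a) (φ b)))
    (hdec : ∀ {c : Tm} {K : Multiset Tm}, Dec c K → Dec (φ c) (K.map φ))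
    (hinv : ∀ {c : Tm} {K : Multiset Tm}, Dec (φ c) K → ∃ K₀, Dec c K₀ ∧ K = K₀.map φ)
    (r₁ r₂ : Tm) :
    Tr (φ (pair r₁ r₂)) (pair (φ r₁) (φ r₂)) ∧ Tr (pair (φ r₁) (φ r₂)) (φ (pair r₁ r₂)) := by
  constructor
  · intro H h
    obtain ⟨H₀, h₀, rfl⟩ := hinv h
    rcases dec_pair_inv h₀ with rfl | ⟨F, G, hF, hG, rfl⟩
    · refine ⟨{φ r₁} + {φ r₂}, Dec.node (Dec.leaf _) (Dec.leaf _), ?_⟩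
      simpa using refn_single (ss_single (hdist r₁ r₂))
        (PTree.node (PTree.leaf (φ r₁)) (PTree.leaf (φ r₂)))
    · exact ⟨_, Dec.node (hdec hF) (hdec hG), by rw [Multiset.map_add]; exact refn_refl _⟩
  · intro H h
    rcases dec_pair_inv h with rfl | ⟨F, G, hF, hG, rfl⟩
    · exact leaf_step (StEq.symm (hdist r₁ r₂))
    · obtain ⟨F₀, hF₀, rfl⟩ := hinv hF
      obtain ⟨G₀, hG₀, rfl⟩ := hinv hG
      exact ⟨_, hdec (Dec.node hF₀ hG₀), by rw [Multiset.map_add]; exact refn_refl _⟩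

private lemma comm_case {φ ψ : Tm → Tm} (c : Tm)
    (hstep : ∀ a : Tm, SeqStar (φ a) (ψ a))
    (hinvφ : ∀ {K : Multiset Tm}, Dec (φ c) K → ∃ K₀, Dec c K₀ ∧ K = K₀.map φ)
    (hinvψ : ∀ {K : Multiset Tm}, Dec (ψ c) K → ∃ K₀, Dec c K₀ ∧ K = K₀.map ψ)
    (hdecφ : ∀ {K₀ : Multiset Tm}, Dec c K₀ → Dec (φ c) (K₀.map φ))
    (hdecψ : ∀ {K₀ : Multiset Tm}, Dec c K₀ → Dec (ψ c) (K₀.map ψ)) :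
    Tr (φ c) (ψ c) ∧ Tr (ψ c) (φ c) := by
  constructor
  · intro H h
    obtain ⟨K₀, h₀, rfl⟩ := hinvφ h
    exact ⟨K₀.map ψ, hdecψ h₀, refn_map_pt hstep K₀⟩
  · intro H h
    obtain ⟨K₀, h₀, rfl⟩ := hinvψ h
    exact ⟨K₀.map φ, hdecφ h₀, refn_map_pt (fun a => ss_symm (hstep a)) K₀⟩

private lemma singleton_case {t t' : Tm} (h : StEq t t')
    (hL : ∀ {K : Multiset Tm}, Dec t K → K = {t})
    (hR : ∀ {K : Multiset Tm}, Dec t' K → K = {t'}) :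
    Tr t t' ∧ Tr t' t := by
  constructor
  · intro H hd; rw [hL hd]; exact leaf_step h
  · intro H hd; rw [hR hd]; exact leaf_step (StEq.symm h)

private lemma cong_case {φ : Tm → Tm} {c c' : Tm}
    (hdist : ∀ a b : Tm, StEq (φ (pair a b)) (pair (φ a) (φ b)))
    (hcong : ∀ {a b : Tm}, StEq a b → StEq (φ a) (φ b))
    (hinv : ∀ {d : Tm} {K : Multiset Tm}, Dec (φ d) K → ∃ K₀, Dec d K₀ ∧ K = K₀.map φ)
    (hdec : ∀ {d : Tm} {K : Multiset Tm}, Dec d K → Dec (φ d) (K.map φ))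
    (IH : Tr c c' ∧ Tr c' c) :
    Tr (φ c) (φ c') ∧ Tr (φ c') (φ c) := by
  constructor
  · intro H h
    obtain ⟨K₀, h₀, rfl⟩ := hinv h
    obtain ⟨K₀', hd', hsub⟩ := IH.1 K₀ h₀
    exact ⟨K₀'.map φ, hdec hd', refn_map hdist hcong hsub⟩
  · intro H h
    obtain ⟨K₀, h₀, rfl⟩ := hinv h
    obtain ⟨K₀', hd', hsub⟩ := IH.2 K₀ h₀
    exact ⟨K₀'.map φ, hdec hd', refn_map hdist hcong hsub⟩
private lemma step_main {t t' : Tm} (h : StEq t t') : Tr t t' ∧ Tr t' t := by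
  induction h with
  | comm r s =>
    constructor
    · intro H hd
      rcases dec_pair_inv hd with rfl | ⟨F, G, hF, hG, rfl⟩
      · exact leaf_step (StEq.comm r s)
      · exact ⟨G + F, Dec.node hG hF, by rw [add_comm]; exact refn_refl _⟩
    · intro H hd
      rcases dec_pair_inv hd with rfl | ⟨F, G, hF, hG, rfl⟩
      · exact leaf_step (StEq.comm s r)
      · exact ⟨G + F, Dec.node hG hF, by rw [add_comm]; exact refn_refl _⟩
  | assoc r s t =>
    constructor
    · intro H hd
      rcases dec_pair_inv hd with rfl | ⟨F, G, hF, hG, rfl⟩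
      · exact leaf_step (StEq.assoc r s t)
      · rcases dec_pair_inv hG with rfl | ⟨G₁, G₂, hG1, hG2, rfl⟩
        · refine ⟨(F + {s}) + {t}, Dec.node (Dec.node hF (Dec.leaf s)) (Dec.leaf t), ?_⟩
          have h1 : Refn ({pair s t} : Multiset Tm) ({s} + {t}) :=
            refn_single (ss_refl _) (PTree.node (PTree.leaf s) (PTree.leaf t))
          have h2 := refn_add (refn_refl F) h1
          rwa [← add_assoc] at h2
        · exact ⟨(F + G₁) + G₂, Dec.node (Dec.node hF hG1) hG2,
            by rw [add_assoc]; exact refn_refl _⟩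
    · intro H hd
      rcases dec_pair_inv hd with rfl | ⟨F, G, hF, hG, rfl⟩
      · exact leaf_step (StEq.symm (StEq.assoc r s t))
      · rcases dec_pair_inv hF with rfl | ⟨F₁, F₂, hF1, hF2, rfl⟩
        · refine ⟨{r} + ({s} + G), Dec.node (Dec.leaf r) (Dec.node (Dec.leaf s) hG), ?_⟩
          have h1 : Refn ({pair r s} : Multiset Tm) ({r} + {s}) :=
            refn_single (ss_refl _) (PTree.node (PTree.leaf r) (PTree.leaf s))
          have h2 := refn_add h1 (refn_refl G)
          rwa [add_assoc] at h2
        · exact ⟨F₁ + (F₂ + G), Dec.node hF1 (Dec.node hF2 hG),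
            by rw [← add_assoc]; exact refn_refl _⟩
  | distLam x A r s =>
    exact distrib_case (φ := Tm.lam x A) (fun a b => StEq.distLam x A a b)
      (fun hh => Dec.lamD x A hh) (fun hh => dec_lam_inv hh) r s
  | distApp r s w =>
    exact distrib_case (φ := fun h => Tm.app h w) (fun a b => StEq.distApp a b w)
      (fun hh => Dec.appD w hh) (fun hh => dec_app_inv hh) r s
  | curry r s t =>
    refine comm_case (φ := fun h => Tm.app h (pair s t)) (ψ := fun h => Tm.app (Tm.app h s) t) r
      (fun a => ss_single (StEq.curry a s t)) (fun hh => dec_app_inv hh) ?_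
      (fun hh => Dec.appD _ hh) ?_
    · intro K hd
      obtain ⟨K₁, h₁, rfl⟩ := dec_app_inv hd
      obtain ⟨K₀, h₀, rfl⟩ := dec_app_inv h₁
      exact ⟨K₀, h₀, by rw [Multiset.map_map]; rfl⟩
    · intro K₀ hd
      have := Dec.appD t (Dec.appD s hd)
      rwa [Multiset.map_map] at this
  | pcommII X x A r hX =>
    refine comm_case (φ := fun h => Tm.tlam X (Tm.lam x A h))
      (ψ := fun h => Tm.lam x A (Tm.tlam X h)) r
      (fun a => ss_single (StEq.pcommII X x A a hX)) ?_ ?_ ?_ ?_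
    · intro K hd
      obtain ⟨K₁, h₁, rfl⟩ := dec_tlam_inv hd
      obtain ⟨K₀, h₀, rfl⟩ := dec_lam_inv h₁
      exact ⟨K₀, h₀, by rw [Multiset.map_map]; rfl⟩
    · intro K hd
      obtain ⟨K₁, h₁, rfl⟩ := dec_lam_inv hd
      obtain ⟨K₀, h₀, rfl⟩ := dec_tlam_inv h₁
      exact ⟨K₀, h₀, by rw [Multiset.map_map]; rfl⟩
    · intro K₀ hd
      have := Dec.tlamD X (Dec.lamD x A hd)
      rwa [Multiset.map_map] at this
    · intro K₀ hd
      have := Dec.lamD x A (Dec.tlamD X hd)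
      rwa [Multiset.map_map] at this
  | pcommEI X x A B r hX =>
    refine comm_case (φ := fun h => Tm.tapp (Tm.lam x A h) B)
      (ψ := fun h => Tm.lam x A (Tm.tapp h B)) r
      (fun a => ss_single (StEq.pcommEI X x A B a hX)) ?_ ?_ ?_ ?_
    · intro K hd
      obtain ⟨K₁, h₁, rfl⟩ := dec_tapp_inv hd
      obtain ⟨K₀, h₀, rfl⟩ := dec_lam_inv h₁
      exact ⟨K₀, h₀, by rw [Multiset.map_map]; rfl⟩
    · intro K hd
      obtain ⟨K₁, h₁, rfl⟩ := dec_lam_inv hd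
      obtain ⟨K₀, h₀, rfl⟩ := dec_tapp_inv h₁
      exact ⟨K₀, h₀, by rw [Multiset.map_map]; rfl⟩
    · intro K₀ hd
      have := Dec.tappD B (Dec.lamD x A hd)
      rwa [Multiset.map_map] at this
    · intro K₀ hd
      have := Dec.lamD x A (Dec.tappD B hd)
      rwa [Multiset.map_map] at this
  | pdistII X r s =>
    exact distrib_case (φ := Tm.tlam X) (fun a b => StEq.pdistII X a b)
      (fun hh => Dec.tlamD X hh) (fun hh => dec_tlam_inv hh) r s
  | pdistEI r s A =>
    exact distrib_case (φ := fun h => Tm.tapp h A) (fun a b => StEq.pdistEI a b A)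
      (fun hh => Dec.tappD A hh) (fun hh => dec_tapp_inv hh) r s
  | pdistIE X A r =>
    refine singleton_case (StEq.pdistIE X A r) (fun hh => dec_proj_inv hh) ?_
    intro K hd
    obtain ⟨K₀, h₀, rfl⟩ := dec_tlam_inv hd
    rw [dec_proj_inv h₀]; simp
  | pdistEE X A B C r hty =>
    refine singleton_case (StEq.pdistEE X A B C r hty) ?_ (fun hh => dec_proj_inv hh)
    intro K hd
    obtain ⟨K₀, h₀, rfl⟩ := dec_tapp_inv hd
    rw [dec_proj_inv h₀]; simp
  | symm h ih => exact ⟨ih.2, ih.1⟩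
  | congLam x A h ih =>
    exact cong_case (fun a b => StEq.distLam x A a b) (fun hh => StEq.congLam x A hh)
      (fun hh => dec_lam_inv hh) (fun hh => Dec.lamD x A hh) ih
  | congAppL w h ih =>
    exact cong_case (φ := fun h => Tm.app h w) (fun a b => StEq.distApp a b w)
      (fun hh => StEq.congAppL w hh) (fun hh => dec_app_inv hh) (fun hh => Dec.appD w hh) ih
  | congAppR c h ih =>
    rename_i r s
    exact comm_case (φ := fun h => Tm.app h r) (ψ := fun h => Tm.app h s) c
      (fun a => ss_single (StEq.congAppR a h)) (fun hh => dec_app_inv hh)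
      (fun hh => dec_app_inv hh) (fun hh => Dec.appD r hh) (fun hh => Dec.appD s hh)
  | congPairL w h ih =>
    rename_i r s
    constructor
    · intro H hd
      rcases dec_pair_inv hd with rfl | ⟨F, G, hF, hG, rfl⟩
      · exact leaf_step (StEq.congPairL w h)
      · obtain ⟨F', hF', hsub⟩ := ih.1 F hF
        exact ⟨F' + G, Dec.node hF' hG, refn_add hsub (refn_refl G)⟩
    · intro H hd
      rcases dec_pair_inv hd with rfl | ⟨F, G, hF, hG, rfl⟩
      · exact leaf_step (StEq.symm (StEq.congPairL w h))
      · obtain ⟨F', hF', hsub⟩ := ih.2 F hF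
        exact ⟨F' + G, Dec.node hF' hG, refn_add hsub (refn_refl G)⟩
  | congPairR w h ih =>
    rename_i r s
    constructor
    · intro H hd
      rcases dec_pair_inv hd with rfl | ⟨F, G, hF, hG, rfl⟩
      · exact leaf_step (StEq.congPairR w h)
      · obtain ⟨G', hG', hsub⟩ := ih.1 G hG
        exact ⟨F + G', Dec.node hF hG', refn_add (refn_refl F) hsub⟩
    · intro H hd
      rcases dec_pair_inv hd with rfl | ⟨F, G, hF, hG, rfl⟩
      · exact leaf_step (StEq.symm (StEq.congPairR w h))
      · obtain ⟨G', hG', hsub⟩ := ih.2 G hG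
        exact ⟨F + G', Dec.node hF hG', refn_add (refn_refl F) hsub⟩
  | congProj A h ih =>
    exact singleton_case (StEq.congProj A h) (fun hh => dec_proj_inv hh)
      (fun hh => dec_proj_inv hh)
  | congTlam X h ih =>
    exact cong_case (fun a b => StEq.pdistII X a b) (fun hh => StEq.congTlam X hh)
      (fun hh => dec_tlam_inv hh) (fun hh => Dec.tlamD X hh) ih
  | congTapp A h ih =>
    exact cong_case (φ := fun h => Tm.tapp h A) (fun a b => StEq.pdistEI a b A)
      (fun hh => StEq.congTapp A hh) (fun hh => dec_tapp_inv hh) (fun hh => Dec.tappD A hh) ih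
private abbrev EPGoal (r s t : Tm) : Prop :=
    (∃ u v, t = Tm.pair u v ∧
      ((∃ t11 t21 t12 t22, SeqStar u (Tm.pair t11 t21) ∧ SeqStar v (Tm.pair t12 t22) ∧
          SeqStar r (Tm.pair t11 t12) ∧ SeqStar s (Tm.pair t21 t22)) ∨
       (∃ w, (SeqStar v (Tm.pair w s) ∧ SeqStar r (Tm.pair u w)) ∨
             (SeqStar v (Tm.pair w r) ∧ SeqStar s (Tm.pair u w)) ∨
             (SeqStar u (Tm.pair w s) ∧ SeqStar r (Tm.pair v w)) ∨
             (SeqStar u (Tm.pair w r) ∧ SeqStar s (Tm.pair v w))) ∨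
       ((SeqStar r u ∧ SeqStar s v) ∨ (SeqStar r v ∧ SeqStar s u)))) ∨
    (∃ x A a a₁ a₂, t = Tm.lam x A a ∧ SeqStar a (Tm.pair a₁ a₂) ∧
        SeqStar r (Tm.lam x A a₁) ∧ SeqStar s (Tm.lam x A a₂)) ∨
    (∃ a v a₁ a₂, t = Tm.app a v ∧ SeqStar a (Tm.pair a₁ a₂) ∧
        SeqStar r (Tm.app a₁ v) ∧ SeqStar s (Tm.app a₂ v)) ∨
    (∃ X a a₁ a₂, t = Tm.tlam X a ∧ SeqStar a (Tm.pair a₁ a₂) ∧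
        SeqStar r (Tm.tlam X a₁) ∧ SeqStar s (Tm.tlam X a₂)) ∨
    (∃ a A a₁ a₂, t = Tm.tapp a A ∧ SeqStar a (Tm.pair a₁ a₂) ∧
        SeqStar r (Tm.tapp a₁ A) ∧ SeqStar s (Tm.tapp a₂ A))

private lemma extract_main {t : Tm} {H : Multiset Tm} (hd : Dec t H) :
    ∀ {r s : Tm} {F G : Multiset Tm}, H = F + G → Rg F r → Rg G s → EPGoal r s t := by
  cases hd with
  | leaf t =>
    intro r s F G hFG hF hG
    have h1 : 0 < Multiset.card F := Multiset.card_pos.mpr (rg_ne hF)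
    have h2 : 0 < Multiset.card G := Multiset.card_pos.mpr (rg_ne hG)
    have h3 := congrArg Multiset.card hFG
    simp only [Multiset.card_singleton, Multiset.card_add] at h3
    omega
  | @node u v F₁ G₁ hu hv =>
    intro r s F G hFG hF hG
    obtain ⟨A, B, C, D, hF₁, hG₁, rfl, rfl⟩ := riesz hFG
    subst hF₁; subst hG₁
    obtain ⟨fu, hfu, hsu⟩ := dec_sound hu
    obtain ⟨fv, hfv, hsv⟩ := dec_sound hv
    refine Or.inl ⟨u, v, rfl, ?_⟩
    by_cases hB : B = 0
    · subst hB
      rw [add_zero] at hfu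
      by_cases hC : C = 0
      · subst hC
        rw [add_zero] at hF
        rw [zero_add] at hG hfv
        have hr : SeqStar r u := ss_trans (rg_tree hF hfu) (ss_symm hsu)
        have hs : SeqStar s v := ss_trans (rg_tree hG hfv) (ss_symm hsv)
        exact Or.inr (Or.inr (Or.inl ⟨hr, hs⟩))
      · have hD : D ≠ 0 := by
          rintro rfl
          exact rg_ne hG (by simp)
        rw [zero_add] at hG
        obtain ⟨tC, tD, htC, htD, hsCD⟩ := regroup hfv hC hD
        have hs : SeqStar s tD := rg_tree hG htD
        have hv' : SeqStar v (pair tC s) :=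
          ss_trans (ss_trans hsv hsCD) (ss_pairR (ss_symm hs))
        have hr' : SeqStar r (pair u tC) :=
          ss_trans (rg_tree hF (PTree.node hfu htC)) (ss_pairL (ss_symm hsu))
        exact Or.inr (Or.inl ⟨tC, Or.inl ⟨hv', hr'⟩⟩)
    · by_cases hA : A = 0
      · subst hA
        rw [zero_add] at hF hfu
        have hC : C ≠ 0 := by
          rintro rfl
          exact rg_ne hF rfl
        by_cases hD : D = 0
        · subst hD
          rw [add_zero] at hG hfv
          have hr : SeqStar r v := ss_trans (rg_tree hF hfv) (ss_symm hsv)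
          have hs : SeqStar s u := ss_trans (rg_tree hG hfu) (ss_symm hsu)
          exact Or.inr (Or.inr (Or.inr ⟨hr, hs⟩))
        · obtain ⟨tC, tD, htC, htD, hsCD⟩ := regroup hfv hC hD
          have hr : SeqStar r tC := rg_tree hF htC
          have hv' : SeqStar v (pair tD r) :=
            ss_trans (ss_trans hsv hsCD)
              (ss_trans (ss_single (StEq.comm tC tD)) (ss_pairR (ss_symm hr)))
          have hs' : SeqStar s (pair u tD) :=
            ss_trans (rg_tree hG (PTree.node hfu htD)) (ss_pairL (ss_symm hsu))
          exact Or.inr (Or.inl ⟨tD, Or.inr (Or.inl ⟨hv', hs'⟩)⟩)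
      · obtain ⟨tA, tB, htA, htB, hsAB⟩ := regroup hfu hA hB
        by_cases hC : C = 0
        · subst hC
          rw [add_zero] at hF
          rw [zero_add] at hfv
          have hr : SeqStar r tA := rg_tree hF htA
          have hu' : SeqStar u (pair tB r) :=
            ss_trans (ss_trans hsu hsAB)
              (ss_trans (ss_single (StEq.comm tA tB)) (ss_pairR (ss_symm hr)))
          have hs' : SeqStar s (pair v tB) :=
            ss_trans (rg_tree hG (PTree.node htB hfv))
              (ss_trans (ss_single (StEq.comm tB fv)) (ss_pairL (ss_symm hsv)))
          exact Or.inr (Or.inl ⟨tB, Or.inr (Or.inr (Or.inr ⟨hu', hs'⟩))⟩)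
        · by_cases hD : D = 0
          · subst hD
            rw [add_zero] at hG hfv
            have hs : SeqStar s tB := rg_tree hG htB
            have hu' : SeqStar u (pair tA s) :=
              ss_trans (ss_trans hsu hsAB) (ss_pairR (ss_symm hs))
            have hr' : SeqStar r (pair v tA) :=
              ss_trans (rg_tree hF (PTree.node htA hfv))
                (ss_trans (ss_single (StEq.comm tA fv)) (ss_pairL (ss_symm hsv)))
            exact Or.inr (Or.inl ⟨tA, Or.inr (Or.inr (Or.inl ⟨hu', hr'⟩))⟩)
          · obtain ⟨tC, tD, htC, htD, hsCD⟩ := regroup hfv hC hD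
            have hr : SeqStar r (pair tA tC) := rg_tree hF (PTree.node htA htC)
            have hs : SeqStar s (pair tB tD) := rg_tree hG (PTree.node htB htD)
            exact Or.inl ⟨tA, tB, tC, tD, ss_trans hsu hsAB, ss_trans hsv hsCD, hr, hs⟩
  | @lamD x A a H₀ h₀ =>
    intro r s F G hFG hF hG
    obtain ⟨F₀, G₀, rfl, rfl, rfl⟩ := map_split hFG
    have hF₀ : F₀ ≠ 0 := by rintro rfl; exact rg_ne hF (by simp)
    have hG₀ : G₀ ≠ 0 := by rintro rfl; exact rg_ne hG (by simp)
    obtain ⟨f, hf, hs⟩ := dec_sound h₀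
    obtain ⟨f₁, f₂, hf₁, hf₂, hsp⟩ := regroup hf hF₀ hG₀
    obtain ⟨g₁, hg₁, hp₁⟩ := ptree_push (fun a b => StEq.distLam x A a b) hf₁
    obtain ⟨g₂, hg₂, hp₂⟩ := ptree_push (fun a b => StEq.distLam x A a b) hf₂
    refine Or.inr (Or.inl ⟨x, A, a, f₁, f₂, rfl, ss_trans hs hsp, ?_, ?_⟩)
    · exact ss_trans (rg_tree hF hg₁) (ss_symm hp₁)
    · exact ss_trans (rg_tree hG hg₂) (ss_symm hp₂)
  | @appD w a H₀ h₀ =>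
    intro r s F G hFG hF hG
    obtain ⟨F₀, G₀, rfl, rfl, rfl⟩ := map_split hFG
    have hF₀ : F₀ ≠ 0 := by rintro rfl; exact rg_ne hF (by simp)
    have hG₀ : G₀ ≠ 0 := by rintro rfl; exact rg_ne hG (by simp)
    obtain ⟨f, hf, hs⟩ := dec_sound h₀
    obtain ⟨f₁, f₂, hf₁, hf₂, hsp⟩ := regroup hf hF₀ hG₀
    obtain ⟨g₁, hg₁, hp₁⟩ := ptree_push (φ := fun h => Tm.app h w)
      (fun a b => StEq.distApp a b w) hf₁
    obtain ⟨g₂, hg₂, hp₂⟩ := ptree_push (φ := fun h => Tm.app h w)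
      (fun a b => StEq.distApp a b w) hf₂
    refine Or.inr (Or.inr (Or.inl ⟨a, w, f₁, f₂, rfl, ss_trans hs hsp, ?_, ?_⟩))
    · exact ss_trans (rg_tree hF hg₁) (ss_symm hp₁)
    · exact ss_trans (rg_tree hG hg₂) (ss_symm hp₂)
  | @tlamD X a H₀ h₀ =>
    intro r s F G hFG hF hG
    obtain ⟨F₀, G₀, rfl, rfl, rfl⟩ := map_split hFG
    have hF₀ : F₀ ≠ 0 := by rintro rfl; exact rg_ne hF (by simp)
    have hG₀ : G₀ ≠ 0 := by rintro rfl; exact rg_ne hG (by simp)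
    obtain ⟨f, hf, hs⟩ := dec_sound h₀
    obtain ⟨f₁, f₂, hf₁, hf₂, hsp⟩ := regroup hf hF₀ hG₀
    obtain ⟨g₁, hg₁, hp₁⟩ := ptree_push (fun a b => StEq.pdistII X a b) hf₁
    obtain ⟨g₂, hg₂, hp₂⟩ := ptree_push (fun a b => StEq.pdistII X a b) hf₂
    refine Or.inr (Or.inr (Or.inr (Or.inl ⟨X, a, f₁, f₂, rfl, ss_trans hs hsp, ?_, ?_⟩)))
    · exact ss_trans (rg_tree hF hg₁) (ss_symm hp₁)
    · exact ss_trans (rg_tree hG hg₂) (ss_symm hp₂)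
  | @tappD A a H₀ h₀ =>
    intro r s F G hFG hF hG
    obtain ⟨F₀, G₀, rfl, rfl, rfl⟩ := map_split hFG
    have hF₀ : F₀ ≠ 0 := by rintro rfl; exact rg_ne hF (by simp)
    have hG₀ : G₀ ≠ 0 := by rintro rfl; exact rg_ne hG (by simp)
    obtain ⟨f, hf, hs⟩ := dec_sound h₀
    obtain ⟨f₁, f₂, hf₁, hf₂, hsp⟩ := regroup hf hF₀ hG₀
    obtain ⟨g₁, hg₁, hp₁⟩ := ptree_push (φ := fun h => Tm.tapp h A)
      (fun a b => StEq.pdistEI a b A) hf₁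
    obtain ⟨g₂, hg₂, hp₂⟩ := ptree_push (φ := fun h => Tm.tapp h A)
      (fun a b => StEq.pdistEI a b A) hf₂
    refine Or.inr (Or.inr (Or.inr (Or.inr ⟨a, A, f₁, f₂, rfl, ss_trans hs hsp, ?_, ?_⟩)))
    · exact ss_trans (rg_tree hF hg₁) (ss_symm hp₁)
    · exact ss_trans (rg_tree hG hg₂) (ss_symm hp₂)

private lemma ginv {r s t : Tm} (h : SeqStar (Tm.pair r s) t) :
    ∃ F G, Dec t (F + G) ∧ Rg F r ∧ Rg G s := by
  induction h with
  | refl =>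
    exact ⟨{r}, {s}, Dec.node (Dec.leaf r) (Dec.leaf s),
      ⟨r, PTree.leaf r, ss_refl r⟩, ⟨s, PTree.leaf s, ss_refl s⟩⟩
  | tail hseq hst ih =>
    obtain ⟨F, G, hd, hF, hG⟩ := ih
    obtain ⟨H', hd', hsub⟩ := (step_main hst).1 _ hd
    obtain ⟨F', G', rfl, hsF, hsG⟩ := refn_split hsub
    exact ⟨F', G', hd', refn_rg hsF hF, refn_rg hsG hG⟩

end EqProdAux

/-- Characterization of terms structurally equivalent to a pair. -/
theorem eq_prod (r s t : Tm) (h : SeqStar (.pair r s) t) :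
    (∃ u v, t = .pair u v ∧
      ((∃ t11 t21 t12 t22, SeqStar u (.pair t11 t21) ∧ SeqStar v (.pair t12 t22) ∧
          SeqStar r (.pair t11 t12) ∧ SeqStar s (.pair t21 t22)) ∨
       (∃ w, (SeqStar v (.pair w s) ∧ SeqStar r (.pair u w)) ∨
             (SeqStar v (.pair w r) ∧ SeqStar s (.pair u w)) ∨
             (SeqStar u (.pair w s) ∧ SeqStar r (.pair v w)) ∨
             (SeqStar u (.pair w r) ∧ SeqStar s (.pair v w))) ∨
       ((SeqStar r u ∧ SeqStar s v) ∨ (SeqStar r v ∧ SeqStar s u)))) ∨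
    (∃ x A a a₁ a₂, t = .lam x A a ∧ SeqStar a (.pair a₁ a₂) ∧
        SeqStar r (.lam x A a₁) ∧ SeqStar s (.lam x A a₂)) ∨
    (∃ a v a₁ a₂, t = .app a v ∧ SeqStar a (.pair a₁ a₂) ∧
        SeqStar r (.app a₁ v) ∧ SeqStar s (.app a₂ v)) ∨
    (∃ X a a₁ a₂, t = .tlam X a ∧ SeqStar a (.pair a₁ a₂) ∧
        SeqStar r (.tlam X a₁) ∧ SeqStar s (.tlam X a₂)) ∨
    (∃ a A a₁ a₂, t = .tapp a A ∧ SeqStar a (.pair a₁ a₂) ∧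
        SeqStar r (.tapp a₁ A) ∧ SeqStar s (.tapp a₂ A)) := by
  obtain ⟨F, G, hd, hF, hG⟩ := ginv h
  exact extract_main hd rfl hF hG
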